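/- arXiv:2505.14790 — 7 statements merged into one kernel-verified Lean document; each statement's English description precedes it below -/
import Mathlib

section
/- Let α be a multiplier on the finite group G. Then for all x,h,k ∈ G the class factors satisfy β_h(x) · β_k(h·x·h⁻¹) = β_{kh}(x). -/
/-- Class factors satisfy `β_h(x) · β_k(hxh⁻¹) = β_{kh}(x)`. -/
theorem stmt_3 {G : Type*} [Group G] [Fintype G]
    (α : G → G → ℂˣ)
    (hα : ∀ x y z : G, α x y * α (x * y) z = α x (y * z) * α y z)
    (hα1 : ∀ x : G, α x 1 = 1 ∧ α 1 x = 1)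
    (β : G → G → ℂˣ)
    (hβ : ∀ h g : G, β h g = α h h⁻¹ / (α h (g * h⁻¹) * α g h⁻¹)) :
    ∀ x h k : G, β h x * β k (h * x * h⁻¹) = β (k * h) x := by
  -- ℂ-valued versions of the hypotheses
  have ha : ∀ x y z : G, (α x y : ℂ) * (α (x * y) z : ℂ) = (α x (y * z) : ℂ) * (α y z : ℂ) := by
    intro x y z
    exact_mod_cast congrArg Units.val (hα x y z)
  have ha1 : ∀ x : G, (α x 1 : ℂ) = 1 := by
    intro x; rw [(hα1 x).1, Units.val_one]
  have hne : ∀ x y : G, (α x y : ℂ) ≠ 0 := fun x y => (α x y).ne_zero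
  -- key: β h g = α (h g h⁻¹) h / α h g
  have key : ∀ h g : G, ((β h g : ℂˣ) : ℂ) = (α (h * g * h⁻¹) h : ℂ) / (α h g : ℂ) := by
    intro h g
    have e1 : (α h g : ℂ) * (α (h * g) h⁻¹ : ℂ)
        = (α h (g * h⁻¹) : ℂ) * (α g h⁻¹ : ℂ) := ha h g h⁻¹
    have e2 : (α (h * g) h⁻¹ : ℂ) * (α (h * g * h⁻¹) h : ℂ) = (α h⁻¹ h : ℂ) := by
      have := ha (h * g) h⁻¹ h
      simpa [inv_mul_cancel, ha1] using this
    have e3 : (α h h⁻¹ : ℂ) = (α h⁻¹ h : ℂ) := by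
      have := ha h h⁻¹ h
      have h1 : (α 1 h : ℂ) = 1 := by rw [(hα1 h).2, Units.val_one]
      simpa [mul_inv_cancel, inv_mul_cancel, ha1, h1] using this
    rw [hβ]
    push_cast
    rw [div_eq_div_iff (mul_ne_zero (hne _ _) (hne _ _)) (hne h g)]
    linear_combination (α h g : ℂ) * e3 - (α h g : ℂ) * e2
      + (α (h * g * h⁻¹) h : ℂ) * e1
  intro x h k
  rw [Units.ext_iff]
  push_cast
  rw [key, key, key]
  -- normalize conjugates
  simp only [mul_inv_rev, mul_assoc]
  set q : G := k * (h * (x * (h⁻¹ * k⁻¹))) with hq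
  have hqk : q * k = k * (h * (x * h⁻¹)) := by simp [hq, mul_assoc]
  have E1 : (α k h : ℂ) * (α (k * h) x : ℂ) = (α k (h * x) : ℂ) * (α h x : ℂ) := ha k h x
  have E2 : (α q k : ℂ) * (α (q * k) h : ℂ) = (α q (k * h) : ℂ) * (α k h : ℂ) := ha q k h
  have E3 : (α k (h * (x * h⁻¹)) : ℂ) * (α (k * (h * (x * h⁻¹))) h : ℂ)
      = (α k (h * (x * h⁻¹) * h) : ℂ) * (α (h * (x * h⁻¹)) h : ℂ) := ha k (h * (x * h⁻¹)) h
  rw [hqk] at E2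
  have hx3 : h * (x * h⁻¹) * h = h * x := by simp [mul_assoc]
  rw [hx3] at E3
  have big : (α (h * (x * h⁻¹)) h : ℂ) * (α q k : ℂ) * (α (k * h) x : ℂ)
        * ((α k h : ℂ) * (α (k * (h * (x * h⁻¹))) h : ℂ))
      = (α q (k * h) : ℂ) * (α h x : ℂ) * (α k (h * (x * h⁻¹)) : ℂ)
        * ((α k h : ℂ) * (α (k * (h * (x * h⁻¹))) h : ℂ)) := by
    linear_combination ((α (h * (x * h⁻¹)) h : ℂ) * (α (k * h) x : ℂ) * (α k h : ℂ)) * E2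
      + ((α (h * (x * h⁻¹)) h : ℂ) * (α q (k * h) : ℂ) * (α k h : ℂ)) * E1
      - ((α q (k * h) : ℂ) * (α k h : ℂ) * (α h x : ℂ)) * E3
  have main := mul_right_cancel₀ (mul_ne_zero (hne _ _) (hne _ _)) big
  rw [div_mul_div_comm, div_eq_div_iff (mul_ne_zero (hne _ _) (hne _ _)) (hne _ _)]
  linear_combination main
end

section
/- Let α be a multiplier on the finite group G and let g ∈ G be α-regular. If h,k ∈ G satisfy h·g·h⁻¹ = k·g·k⁻¹, then β_h(g) = β_k(g); that is, for α-regular g the class factor β_h(g) depends only on g and the conjugate g' = h·g·h⁻¹, not on h. -/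
/-- For an `α`-regular element `g`, the class factor `β_h(g)` depends
only on `g` and the conjugate `g' = h·g·h⁻¹`, not on `h`. -/
theorem stmt_4 {G : Type*} [Group G] [Fintype G]
    (α : G → G → ℂˣ)
    (hα : ∀ x y z : G, α x y * α (x * y) z = α x (y * z) * α y z)
    (hα1 : ∀ x : G, α x 1 = 1 ∧ α 1 x = 1)
    (β : G → G → ℂˣ)
    (hβ : ∀ h g : G, β h g = α h h⁻¹ / (α h (g * h⁻¹) * α g h⁻¹))
    (g : G) (hreg : ∀ h : G, g * h = h * g → β h g = 1) :
    ∀ h k : G, h * g * h⁻¹ = k * g * k⁻¹ → β h g = β k g := by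
  have hc : ∀ x y z : G, (α x y : ℂ) * α (x*y) z = α x (y*z) * α y z := by
    intro x y z
    exact_mod_cast congrArg Units.val (hα x y z)
  -- formula: β a g * α a g = α (a*g*a⁻¹) a  in ℂ
  have hform : ∀ a : G, (β a g : ℂ) * α a g = α (a*g*a⁻¹) a := by
    intro a
    have e1 : (α a g : ℂ) * α (a*g) a⁻¹ = α a (g*a⁻¹) * α g a⁻¹ := hc a g a⁻¹
    have e2 : (α (a*g) a⁻¹ : ℂ) * α (a*g*a⁻¹) a = α a⁻¹ a := by
      have := hc (a*g) a⁻¹ a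
      simpa [(hα1 (a*g)).1] using this
    have e3 : (α a a⁻¹ : ℂ) = α a⁻¹ a := by
      have := hc a a⁻¹ a
      simpa [(hα1 a).1, (hα1 a).2] using this
    have hb : (β a g : ℂ) * (α a (g*a⁻¹) * α g a⁻¹) = α a a⁻¹ := by
      have hv : (β a g : ℂ) = (α a a⁻¹ : ℂ) / ((α a (g*a⁻¹) : ℂ) * α g a⁻¹) := by
        exact_mod_cast congrArg Units.val (hβ a g)
      rw [hv]; field_simp
    have hne : (α (a*g) a⁻¹ : ℂ) ≠ 0 := Units.ne_zero _
    apply mul_left_cancel₀ hne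
    linear_combination (β a g : ℂ) * e1 + hb + e3 - e2
  have key : ∀ a b : G, g*b = b*g → β (a*b) g = β a g := by
    intro a b hcomm
    have hbg : b*g*b⁻¹ = g := by rw [← hcomm, mul_inv_cancel_right]
    have hab : a*b*g*(a*b)⁻¹ = a*g*a⁻¹ := by
      calc a*b*g*(a*b)⁻¹ = a*(b*g*b⁻¹)*a⁻¹ := by group
        _ = a*g*a⁻¹ := by rw [hbg]
    have hBS : (α b g : ℂ) = α g b := by
      have h1 := hform b
      rw [hbg, hreg b hcomm] at h1
      simpa using h1
    have e1 := hc a b g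
    have e2 : (α a (b*g) : ℂ) * α g b = α a g * α (a*g) b := by
      have h2 := (hc a g b).symm
      rw [hcomm] at h2
      exact h2
    have e3 := hc (a*g*a⁻¹) a b
    rw [inv_mul_cancel_right] at e3
    have h4 := hform (a*b)
    rw [hab] at h4
    have h5 := hform a
    have hWV : (α a b : ℂ) * α g b * (α (a*g*a⁻¹) (a*b) * α a g)
        = α a b * α g b * (α (a*g*a⁻¹) a * α (a*b) g) := by
      linear_combination (-((α a g : ℂ) * α g b)) * e3
        - (α a g : ℂ) * α (a*g*a⁻¹) a * α (a*g) b * hBS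
        - (α (a*g*a⁻¹) a : ℂ) * α b g * e2
        - (α (a*g*a⁻¹) a : ℂ) * α g b * e1
    have hWU : (α (a*g*a⁻¹) (a*b) : ℂ) * α a g = α (a*g*a⁻¹) a * α (a*b) g :=
      mul_left_cancel₀ (mul_ne_zero (Units.ne_zero _) (Units.ne_zero _)) hWV
    refine Units.ext ?_
    apply mul_right_cancel₀
      (mul_ne_zero (Units.ne_zero (α (a*b) g)) (Units.ne_zero (α a g)))
    linear_combination (α a g : ℂ) * h4 + hWU - (α (a*b) g : ℂ) * h5
  intro h k hhk
  have h3 : (k⁻¹*h)*g*(k⁻¹*h)⁻¹ = g := by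
    calc (k⁻¹*h)*g*(k⁻¹*h)⁻¹ = k⁻¹*(h*g*h⁻¹)*k := by group
      _ = k⁻¹*(k*g*k⁻¹)*k := by rw [hhk]
      _ = g := by group
  have hcomm : g*(k⁻¹*h) = (k⁻¹*h)*g := by
    conv_lhs => rw [← h3]
    group
  have := key k (k⁻¹*h) hcomm
  simpa [mul_inv_cancel_left] using this
end

section
/- Let α be a multiplier on the finite group G and (π,V,α) an irreducible projective representation with character χ. Then for every g ∈ G, (1/|G|) · Σ_{h∈G} β_h(g)⁻¹ · π(h·g·h⁻¹) = (χ(g)/dim V) • 1_V. -/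
private lemma conj_of_smul_aux {V : Type*} [AddCommGroup V] [Module ℂ V]
    (u v : (Module.End ℂ V)ˣ) (c : ℂˣ)
    (huv : (u : Module.End ℂ V) = (c : ℂ) • (v : Module.End ℂ V)) (x : Module.End ℂ V) :
    (u : Module.End ℂ V) * x * (↑u⁻¹ : Module.End ℂ V)
      = (v : Module.End ℂ V) * x * (↑v⁻¹ : Module.End ℂ V) := by
  have hinv : (↑u⁻¹ : Module.End ℂ V) = (c : ℂ)⁻¹ • (↑v⁻¹ : Module.End ℂ V) := by
    apply Units.inv_eq_of_mul_eq_one_right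
    rw [huv, smul_mul_assoc, mul_smul_comm, smul_smul,
      mul_inv_cancel₀ (Units.ne_zero c), one_smul, Units.mul_inv]
  rw [huv, hinv, smul_mul_assoc, smul_mul_assoc, mul_smul_comm, smul_smul,
    mul_inv_cancel₀ (Units.ne_zero c), one_smul]

/-- For an irreducible projective representation,
`(1/|G|) Σ_h β_h(g)⁻¹ π(hgh⁻¹) = (χ(g)/dim V) • 1`. -/
theorem stmt_5 {G : Type*} [Group G] [Fintype G]
    {V : Type*} [AddCommGroup V] [Module ℂ V] [FiniteDimensional ℂ V]
    (α : G → G → ℂˣ)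
    (hα : ∀ x y z : G, α x y * α (x * y) z = α x (y * z) * α y z)
    (hα1 : ∀ x : G, α x 1 = 1 ∧ α 1 x = 1)
    (π : G → (Module.End ℂ V)ˣ)
    (hπ1 : π 1 = 1)
    (hπ : ∀ x y : G, (π x : Module.End ℂ V) * (π y : Module.End ℂ V)
        = (α x y : ℂ) • (π (x * y) : Module.End ℂ V))
    (hirr : ∀ W : Submodule ℂ V,
        (∀ g : G, ∀ v ∈ W, (π g : Module.End ℂ V) v ∈ W) → W = ⊥ ∨ W = ⊤)
    (χ : G → ℂ) (hχ : ∀ g : G, χ g = LinearMap.trace ℂ V (π g : Module.End ℂ V))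
    (β : G → G → ℂˣ)
    (hβ : ∀ h g : G, β h g = α h h⁻¹ / (α h (g * h⁻¹) * α g h⁻¹)) :
    ∀ g : G,
      (Fintype.card G : ℂ)⁻¹ •
          ∑ h : G, ((β h g : ℂ)⁻¹) • (π (h * g * h⁻¹) : Module.End ℂ V)
        = (χ g / (Module.finrank ℂ V : ℂ)) • (1 : Module.End ℂ V) := by
  intro g
  -- inverse formula
  have hinv : ∀ h : G, (↑(π h)⁻¹ : Module.End ℂ V)
      = ((α h h⁻¹ : ℂ))⁻¹ • (π h⁻¹ : Module.End ℂ V) := by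
    intro h
    apply Units.inv_eq_of_mul_eq_one_right
    rw [mul_smul_comm, hπ, mul_inv_cancel, hπ1, smul_smul,
      inv_mul_cancel₀ (Units.ne_zero (α h h⁻¹)), one_smul, Units.val_one]
  -- key identity: β h g⁻¹ • π(hgh⁻¹) = π h * π g * (π h)⁻¹
  have key : ∀ h : G, ((β h g : ℂ)⁻¹) • (π (h * g * h⁻¹) : Module.End ℂ V)
      = (π h : Module.End ℂ V) * (π g : Module.End ℂ V) * (↑(π h)⁻¹ : Module.End ℂ V) := by
    intro h
    rw [hπ, hinv, smul_mul_assoc, mul_smul_comm, smul_smul, hπ, smul_smul]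
    congr 1
    have hc := hα h g h⁻¹
    have h1 : (α h g : ℂ) * (α (h * g) h⁻¹ : ℂ) = (α h (g * h⁻¹) : ℂ) * (α g h⁻¹ : ℂ) := by
      have : ((α h g * α (h * g) h⁻¹ : ℂˣ) : ℂ) = ((α h (g * h⁻¹) * α g h⁻¹ : ℂˣ) : ℂ) := by
        rw [hc]
      push_cast at this; exact this
    have h2 : ((β h g : ℂ)) = (α h h⁻¹ : ℂ) / ((α h (g * h⁻¹) : ℂ) * (α g h⁻¹ : ℂ)) := by
      rw [hβ h g]; push_cast; ring
    rw [h2]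
    have n1 : (α h (g * h⁻¹) : ℂ) ≠ 0 := Units.ne_zero _
    have n2 : (α g h⁻¹ : ℂ) ≠ 0 := Units.ne_zero _
    have n3 : (α h h⁻¹ : ℂ) ≠ 0 := Units.ne_zero _
    field_simp
    linear_combination -h1
  -- abbreviation for the sum
  set S : Module.End ℂ V :=
    ∑ h : G, ((β h g : ℂ)⁻¹) • (π (h * g * h⁻¹) : Module.End ℂ V) with hS
  have hSconj : S = ∑ h : G,
      (π h : Module.End ℂ V) * (π g : Module.End ℂ V) * (↑(π h)⁻¹ : Module.End ℂ V) := by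
    rw [hS]; exact Finset.sum_congr rfl fun h _ => key h
  -- conjugation identity
  have conj_eq : ∀ k h : G,
      (π k : Module.End ℂ V) *
        ((π h : Module.End ℂ V) * (π g : Module.End ℂ V) * (↑(π h)⁻¹ : Module.End ℂ V)) *
        (↑(π k)⁻¹ : Module.End ℂ V)
      = (π (k * h) : Module.End ℂ V) * (π g : Module.End ℂ V) *
        (↑(π (k * h))⁻¹ : Module.End ℂ V) := by
    intro k h
    have e1 : (π k : Module.End ℂ V) *
        ((π h : Module.End ℂ V) * (π g : Module.End ℂ V) * (↑(π h)⁻¹ : Module.End ℂ V)) *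
        (↑(π k)⁻¹ : Module.End ℂ V)
        = (↑(π k * π h) : Module.End ℂ V) * (π g : Module.End ℂ V) *
          (↑((π k * π h)⁻¹) : Module.End ℂ V) := by
      rw [mul_inv_rev, Units.val_mul, Units.val_mul]
      noncomm_ring
    rw [e1]
    exact conj_of_smul_aux (π k * π h) (π (k * h)) (α k h) (by rw [Units.val_mul, hπ]) _
  -- S commutes with every π k
  have hcomm : ∀ k : G, (π k : Module.End ℂ V) * S = S * (π k : Module.End ℂ V) := by
    intro k
    have hconjS : (π k : Module.End ℂ V) * S * (↑(π k)⁻¹ : Module.End ℂ V) = S := by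
      rw [hSconj, Finset.mul_sum, Finset.sum_mul]
      calc ∑ h : G, (π k : Module.End ℂ V) *
              ((π h : Module.End ℂ V) * (π g : Module.End ℂ V) * (↑(π h)⁻¹ : Module.End ℂ V)) *
              (↑(π k)⁻¹ : Module.End ℂ V)
          = ∑ h : G, (π (k * h) : Module.End ℂ V) * (π g : Module.End ℂ V) *
              (↑(π (k * h))⁻¹ : Module.End ℂ V) :=
            Finset.sum_congr rfl fun h _ => conj_eq k h
        _ = ∑ h : G, (π h : Module.End ℂ V) * (π g : Module.End ℂ V) *
              (↑(π h)⁻¹ : Module.End ℂ V) :=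
            Fintype.sum_equiv (Equiv.mulLeft k) _ _ (fun h => rfl)
    calc (π k : Module.End ℂ V) * S
        = (π k : Module.End ℂ V) * S * ((↑(π k)⁻¹ : Module.End ℂ V) * (π k : Module.End ℂ V)) := by
          rw [Units.inv_mul, mul_one]
      _ = ((π k : Module.End ℂ V) * S * (↑(π k)⁻¹ : Module.End ℂ V)) * (π k : Module.End ℂ V) := by
          noncomm_ring
      _ = S * (π k : Module.End ℂ V) := by rw [hconjS]
  -- trace of S
  have htr : LinearMap.trace ℂ V S = (Fintype.card G : ℂ) * χ g := by
    rw [hSconj, map_sum]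
    have hterm : ∀ h : G, LinearMap.trace ℂ V
        ((π h : Module.End ℂ V) * (π g : Module.End ℂ V) * (↑(π h)⁻¹ : Module.End ℂ V)) = χ g := by
      intro h
      rw [mul_assoc, LinearMap.trace_mul_comm, mul_assoc, Units.inv_mul, mul_one, hχ]
    rw [Finset.sum_congr rfl fun h _ => hterm h, Finset.sum_const, Finset.card_univ,
      nsmul_eq_mul]
  -- Schur's lemma
  rcases subsingleton_or_nontrivial V with hV | hV
  · exact Subsingleton.elim _ _
  · obtain ⟨c, hc⟩ := Module.End.exists_eigenvalue S
    have hWinv : ∀ k : G, ∀ v ∈ Module.End.eigenspace S c,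
        (π k : Module.End ℂ V) v ∈ Module.End.eigenspace S c := by
      intro k v hv
      rw [Module.End.mem_eigenspace_iff] at hv ⊢
      calc S ((π k : Module.End ℂ V) v) = ((π k : Module.End ℂ V) * S) v := by
            rw [hcomm]; rfl
        _ = (π k : Module.End ℂ V) (S v) := rfl
        _ = (π k : Module.End ℂ V) (c • v) := by rw [hv]
        _ = c • (π k : Module.End ℂ V) v := map_smul _ _ _
    rcases hirr (Module.End.eigenspace S c) hWinv with hbot | htop
    · exact absurd hbot hc
    · have hSc : S = c • 1 := by
        apply LinearMap.ext; intro v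
        have hv : v ∈ Module.End.eigenspace S c := htop ▸ Submodule.mem_top
        rw [Module.End.mem_eigenspace_iff] at hv
        simpa using hv
      have h3 : c * (Module.finrank ℂ V : ℂ) = (Fintype.card G : ℂ) * χ g := by
        have h4 := htr
        rw [hSc, map_smul, LinearMap.trace_one] at h4
        simpa [smul_eq_mul] using h4
      have hf : (Module.finrank ℂ V : ℂ) ≠ 0 :=
        Nat.cast_ne_zero.mpr Module.finrank_pos.ne'
      have hcard : (Fintype.card G : ℂ) ≠ 0 := Nat.cast_ne_zero.mpr Fintype.card_ne_zero
      rw [hSc, smul_smul]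
      congr 1
      field_simp
      linear_combination h3
end

section
/- Let α be a unitary multiplier on the finite group G, let C⁽¹⁾,…,C⁽ᵐ⁾ be the α-regular conjugacy classes of G with chosen representatives c₀⁽ⁱ⁾ ∈ C⁽ⁱ⁾. For each α-regular class A with representative a₀ define the m×m complex matrix M_A by (M_A)_{BC} = (1/√(|B|·|C|)) · Σ_{a∈A, b∈B, ab∈C} [β(c₀, ab) / (β(a₀, a)·β(b₀, b))] · α(a,b), where a₀, b₀, c₀ are the chosen representatives of the α-regular classes A, B, C. Then for every irreducible projective representation of G with multiplier α, with character χ and degree d, the vector v ∈ ℂᵐ with components v_i = χ(c₀⁽ⁱ⁾)·√(|C⁽ⁱ⁾|/|G|) satisfies M_A · v = (|A|·χ(a₀)/d) · v for every α-regular class A. -/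
open scoped Classical


private lemma units_calc1 (a b c : ℂˣ) : a * c / (b * a) * b = c := by
  apply Units.ext
  push_cast
  have : (a : ℂ) ≠ 0 := Units.ne_zero _
  have : (b : ℂ) ≠ 0 := Units.ne_zero _
  field_simp

/-- key identity: β h g * α h g = α (h g h⁻¹) h. -/
lemma key_alpha {G : Type*} [Group G] (α : G → G → ℂˣ)
    (hα : ∀ x y z : G, α x y * α (x * y) z = α x (y * z) * α y z)
    (hα1 : ∀ x : G, α x 1 = 1 ∧ α 1 x = 1)
    (β : G → G → ℂˣ)
    (hβ : ∀ h g : G, β h g = α h h⁻¹ / (α h (g * h⁻¹) * α g h⁻¹)) :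
    ∀ h g : G, β h g * α h g = α (h * g * h⁻¹) h := by
  intro h g
  have e1 := hα h g h⁻¹
  have e2 := hα (h * g) h⁻¹ h
  have e3 := hα h h⁻¹ h
  simp only [inv_mul_cancel, mul_inv_cancel, (hα1 _).1, (hα1 _).2, one_mul, mul_one] at e2 e3
  rw [hβ, ← e1, e3, ← e2]
  exact units_calc1 _ _ _

private lemma calc_aux (A P X Y Q R S T U : ℂ)
    (hY : Y ≠ 0) (hR : R ≠ 0) (hT : T ≠ 0) (hQ : Q ≠ 0) (hU : U ≠ 0)
    (f1 : A * P = X * Y) (f2 : Q * P = R * S) (f3 : Y * T = R * U) :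
    X / T = A / Q * (S / U) := by
  rw [div_mul_div_comm, div_eq_div_iff hT (mul_ne_zero hQ hU)]
  apply mul_right_cancel₀ (mul_ne_zero hY hR)
  linear_combination (-(Q * U * R)) * f1 + (A * U * R) * f2 + (-(A * S * R)) * f3

lemma beta_comp {G : Type*} [Group G] (α : G → G → ℂˣ)
    (hα : ∀ x y z : G, α x y * α (x * y) z = α x (y * z) * α y z)
    (hα1 : ∀ x : G, α x 1 = 1 ∧ α 1 x = 1)
    (β : G → G → ℂˣ)
    (hβ : ∀ h g : G, β h g = α h h⁻¹ / (α h (g * h⁻¹) * α g h⁻¹)) :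
    ∀ h k g : G, β (h * k) g = β h (k * g * k⁻¹) * β k g := by
  have key := key_alpha α hα hα1 β hβ
  have keyd : ∀ h g : G, β h g = α (h * g * h⁻¹) h / α h g := by
    intro h g
    rw [← key h g, mul_div_cancel_right]
  intro h k g
  have f1 := hα (h * (k * g * k⁻¹) * h⁻¹) h k
  rw [show (h * (k * g * k⁻¹) * h⁻¹) * h = h * (k * g * k⁻¹) by group] at f1
  have f2 := hα h (k * g * k⁻¹) k
  rw [show (k * g * k⁻¹) * k = k * g by group] at f2
  have f3 := hα h k g
  rw [keyd, keyd, keyd,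
    show (h * k) * g * (h * k)⁻¹ = h * (k * g * k⁻¹) * h⁻¹ by group]
  apply Units.ext
  push_cast
  exact calc_aux _ ((α (h * (k * g * k⁻¹)) k : ℂ)) _ _ _ ((α h (k * g) : ℂ)) _ _ _
    (Units.ne_zero _) (Units.ne_zero _) (Units.ne_zero _) (Units.ne_zero _) (Units.ne_zero _)
    (by exact_mod_cast congrArg Units.val f1)
    (by exact_mod_cast congrArg Units.val f2)
    (by exact_mod_cast congrArg Units.val f3)

/-- Burnside's algorithm for projective irrep characters: the vector
`v_i = χ(c₀⁽ⁱ⁾)·√(|C⁽ⁱ⁾|/|G|)` is an eigenvector of each class-sum matrix `M_A`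
with eigenvalue `|A|·χ(a₀)/d`. -/
theorem stmt_6 {G : Type*} [Group G] [Fintype G]
    {V : Type*} [AddCommGroup V] [Module ℂ V] [FiniteDimensional ℂ V]
    (α : G → G → ℂˣ)
    (hα : ∀ x y z : G, α x y * α (x * y) z = α x (y * z) * α y z)
    (hα1 : ∀ x : G, α x 1 = 1 ∧ α 1 x = 1)
    (N : ℕ) (hN : 0 < N) (hunit : ∀ x y : G, (α x y) ^ N = 1)
    -- class factors
    (β : G → G → ℂˣ)
    (hβ : ∀ h g : G, β h g = α h h⁻¹ / (α h (g * h⁻¹) * α g h⁻¹))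
    -- α-regularity
    (reg : G → Prop)
    (hregdef : ∀ g : G, reg g ↔ ∀ h : G, g * h = h * g → β h g = 1)
    -- an enumeration of the α-regular conjugacy classes by chosen representatives
    {ι : Type*} [Fintype ι] (c₀ : ι → G)
    (hc₀reg : ∀ i : ι, reg (c₀ i))
    (hc₀inj : ∀ i j : ι, IsConj (c₀ i) (c₀ j) → i = j)
    (hc₀surj : ∀ g : G, reg g → ∃ i : ι, IsConj (c₀ i) g)
    (cls : ι → Finset G)
    (hcls : ∀ i : ι, cls i = Finset.univ.filter (fun g => IsConj (c₀ i) g))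
    -- the well-defined class factor β(g, g') for α-regular g
    (B : G → G → ℂˣ)
    (hB : ∀ g h : G, reg g → B g (h * g * h⁻¹) = β h g)
    -- the matrices M_A
    (M : ι → Matrix ι ι ℂ)
    (hM : ∀ A Bc C : ι, M A Bc C =
      (Real.sqrt (((cls Bc).card : ℝ) * ((cls C).card : ℝ)) : ℂ)⁻¹ *
        ∑ a ∈ cls A, ∑ b ∈ cls Bc,
          if a * b ∈ cls C then
            ((B (c₀ C) (a * b) : ℂ) / ((B (c₀ A) a : ℂ) * (B (c₀ Bc) b : ℂ)))
              * (α a b : ℂ)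
          else 0)
    -- an irreducible projective representation with multiplier α
    (π : G → (Module.End ℂ V)ˣ)
    (hπ1 : π 1 = 1)
    (hπ : ∀ x y : G, (π x : Module.End ℂ V) * (π y : Module.End ℂ V)
        = (α x y : ℂ) • (π (x * y) : Module.End ℂ V))
    (hirr : ∀ W : Submodule ℂ V,
        (∀ g : G, ∀ v ∈ W, (π g : Module.End ℂ V) v ∈ W) → W = ⊥ ∨ W = ⊤)
    (χ : G → ℂ) (hχ : ∀ g : G, χ g = LinearMap.trace ℂ V (π g : Module.End ℂ V))
    (d : ℕ) (hd : d = Module.finrank ℂ V)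
    -- the candidate eigenvector
    (v : ι → ℂ)
    (hv : ∀ i : ι, v i = χ (c₀ i) *
        Real.sqrt (((cls i).card : ℝ) / (Fintype.card G : ℝ))) :
    ∀ A : ι, (M A).mulVec v = (((cls A).card : ℂ) * χ (c₀ A) / (d : ℂ)) • v := by
    -- degenerate case
  rcases subsingleton_or_nontrivial V with hV | hV
  · have hχ0 : ∀ g : G, χ g = 0 := by
      intro g
      rw [hχ, Subsingleton.elim ((π g : Module.End ℂ V)) 0, map_zero]
    have hv0 : v = 0 := by
      funext i; rw [hv, hχ0, zero_mul]; rfl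
    intro A
    rw [hv0, Matrix.mulVec_zero, smul_zero]
  -- main case
  have key := key_alpha α hα hα1 β hβ
  have bcomp := beta_comp α hα hα1 β hβ
  have hclsmem : ∀ i (a : G), a ∈ cls i ↔ IsConj (c₀ i) a := by
    intro i a; rw [hcls]; simp
  -- regularity is a class function
  have regcls : ∀ i, ∀ a ∈ cls i, reg a := by
    intro i a ha
    obtain ⟨k, hk⟩ := isConj_iff.mp ((hclsmem i a).mp ha)
    rw [hregdef]
    intro h hcomm
    have hmc : (k⁻¹ * h * k) * c₀ i = c₀ i * (k⁻¹ * h * k) := by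
      have h1 : (k * c₀ i * k⁻¹) * h = h * (k * c₀ i * k⁻¹) := by rw [hk]; exact hcomm
      have := congrArg (fun x => k⁻¹ * x * k) h1
      simpa [mul_assoc] using this.symm
    have hm1 : β (k⁻¹ * h * k) (c₀ i) = 1 :=
      (hregdef (c₀ i)).mp (hc₀reg i) _ (by rw [hmc])
    have e1 : β (h * k) (c₀ i) = β h (k * c₀ i * k⁻¹) * β k (c₀ i) := bcomp h k (c₀ i)
    have e2 : β (k * (k⁻¹ * h * k)) (c₀ i)
        = β k ((k⁻¹ * h * k) * c₀ i * (k⁻¹ * h * k)⁻¹) * β (k⁻¹ * h * k) (c₀ i) :=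
      bcomp k (k⁻¹ * h * k) (c₀ i)
    rw [show (k⁻¹ * h * k) * c₀ i * (k⁻¹ * h * k)⁻¹ = c₀ i by
        rw [hmc, mul_inv_cancel_right],
      show k * (k⁻¹ * h * k) = h * k by group, hm1, mul_one] at e2
    rw [e2, hk] at e1
    have e3 : β h a * β k (c₀ i) = 1 * β k (c₀ i) := by rw [one_mul]; exact e1.symm
    exact mul_right_cancel e3
  -- B is multiplicative along conjugation
  have Bconj : ∀ i, ∀ a ∈ cls i, ∀ h : G,
      B (c₀ i) (h * a * h⁻¹) = β h a * B (c₀ i) a := by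
    intro i a ha h
    obtain ⟨k, hk⟩ := isConj_iff.mp ((hclsmem i a).mp ha)
    rw [← hk, show h * (k * c₀ i * k⁻¹) * h⁻¹ = (h * k) * c₀ i * (h * k)⁻¹ by group,
      hB _ _ (hc₀reg i), hB _ _ (hc₀reg i), bcomp h k (c₀ i)]
  -- π values are nonzero endomorphisms
  have hπne : ∀ g : G, (π g : Module.End ℂ V) ≠ 0 := by
    intro g hzero
    obtain ⟨x, hx⟩ := exists_ne (0 : V)
    apply hx
    have h1 := Units.inv_mul (π g)
    rw [hzero, mul_zero] at h1
    have := congrArg (fun f : Module.End ℂ V => f x) h1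
    simpa using this.symm
  -- conjugation formula for π (pre-inverse form)
  have C1 : ∀ h g : G, (π h : Module.End ℂ V) * (π g : Module.End ℂ V)
      = ((β h g : ℂ))⁻¹ • ((π (h * g * h⁻¹) : Module.End ℂ V) * (π h : Module.End ℂ V)) := by
    intro h g
    have hr := hπ (h * g * h⁻¹) h
    rw [show (h * g * h⁻¹) * h = h * g by group] at hr
    rw [hπ h g, hr, smul_smul]
    congr 1
    have hk : (β h g : ℂ) * (α h g : ℂ) = (α (h * g * h⁻¹) h : ℂ) := by
      exact_mod_cast congrArg Units.val (key h g)
    have hβne : (β h g : ℂ) ≠ 0 := Units.ne_zero _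
    rw [← hk, inv_mul_cancel_left₀ hβne]
  -- character conjugation formula
  have C2 : ∀ h g : G, χ (h * g * h⁻¹) = (β h g : ℂ) * χ g := by
    intro h g
    have t2 : ((π h : Module.End ℂ V) * (π g : Module.End ℂ V))
          * (((π h)⁻¹ : (Module.End ℂ V)ˣ) : Module.End ℂ V)
        = ((β h g : ℂ))⁻¹ • (π (h * g * h⁻¹) : Module.End ℂ V) := by
      rw [C1 h g, smul_mul_assoc, mul_assoc, Units.mul_inv, mul_one]
    have t1 : LinearMap.trace ℂ V (((π h : Module.End ℂ V) * (π g : Module.End ℂ V))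
          * (((π h)⁻¹ : (Module.End ℂ V)ˣ) : Module.End ℂ V))
        = LinearMap.trace ℂ V (π g : Module.End ℂ V) := by
      rw [LinearMap.trace_mul_comm, ← mul_assoc, Units.inv_mul, one_mul]
    rw [t2, map_smul, smul_eq_mul, ← hχ, ← hχ] at t1
    have hβne : (β h g : ℂ) ≠ 0 := Units.ne_zero _
    field_simp at t1 ⊢
    linear_combination t1
  -- χ vanishes off the α-regular elements
  have hχvan : ∀ g : G, ¬ reg g → χ g = 0 := by
    intro g hreg
    rw [hregdef] at hreg; push_neg at hreg
    obtain ⟨h, hcomm, hne⟩ := hreg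
    have hg : h * g * h⁻¹ = g := by
      rw [← hcomm, mul_inv_cancel_right]
    have hc := C2 h g
    rw [hg] at hc
    have hβ1 : (β h g : ℂ) ≠ 1 := fun hx => hne (Units.ext (by simpa using hx))
    have hz : ((β h g : ℂ) - 1) * χ g = 0 := by linear_combination -hc
    rcases mul_eq_zero.mp hz with h' | h'
    · exact absurd (sub_eq_zero.mp h') hβ1
    · exact h'
  -- character on a class
  have hχcls : ∀ i, ∀ a ∈ cls i, χ a = (B (c₀ i) a : ℂ) * χ (c₀ i) := by
    intro i a ha
    obtain ⟨k, hk⟩ := isConj_iff.mp ((hclsmem i a).mp ha)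
    rw [← hk, hB _ _ (hc₀reg i)]
    exact C2 k (c₀ i)
  have hd0 : (d : ℂ) ≠ 0 := by
    have hpos : 0 < Module.finrank ℂ V := Module.finrank_pos
    rw [hd]
    exact_mod_cast hpos.ne'
  -- the class sums
  set T : ι → Module.End ℂ V :=
    fun i => ∑ a ∈ cls i, ((B (c₀ i) a : ℂ))⁻¹ • (π a : Module.End ℂ V) with hT
  have hmemconj : ∀ i, ∀ a ∈ cls i, ∀ h : G, h * a * h⁻¹ ∈ cls i := by
    intro i a ha h
    exact (hclsmem i _).mpr (((hclsmem i a).mp ha).trans (isConj_iff.mpr ⟨h, rfl⟩))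
  have Tcomm : ∀ i, ∀ h : G,
      (π h : Module.End ℂ V) * T i = T i * (π h : Module.End ℂ V) := by
    intro i h
    rw [hT]
    simp only
    rw [Finset.mul_sum, Finset.sum_mul]
    have step : ∀ a ∈ cls i,
        (π h : Module.End ℂ V) * (((B (c₀ i) a : ℂ))⁻¹ • (π a : Module.End ℂ V))
        = ((B (c₀ i) (h * a * h⁻¹) : ℂ))⁻¹
            • ((π (h * a * h⁻¹) : Module.End ℂ V) * (π h : Module.End ℂ V)) := by
      intro a ha
      rw [mul_smul_comm, C1 h a, smul_smul, Bconj i a ha h]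
      congr 1
      push_cast
      rw [mul_inv]
      ring
    rw [Finset.sum_congr rfl step]
    refine Finset.sum_nbij' (fun a => h * a * h⁻¹) (fun a => h⁻¹ * a * h)
      (fun a ha => hmemconj i a ha h) (fun a ha => ?_) (fun a ha => by group)
      (fun a ha => by group) (fun a ha => ?_)
    · have := hmemconj i a ha h⁻¹
      rwa [inv_inv] at this
    · rw [smul_mul_assoc]
  -- Schur: each T i is the scalar lam i
  set lam : ι → ℂ := fun i => ((cls i).card : ℂ) * χ (c₀ i) / (d : ℂ) with hlam
  have Tsc : ∀ i, T i = lam i • (1 : Module.End ℂ V) := by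
    intro i
    obtain ⟨μ, hμ⟩ := Module.End.exists_eigenvalue (T i)
    have hWinv : ∀ g : G, ∀ x ∈ Module.End.eigenspace (T i) μ,
        (π g : Module.End ℂ V) x ∈ Module.End.eigenspace (T i) μ := by
      intro g x hx
      rw [Module.End.mem_eigenspace_iff] at hx ⊢
      have := congrArg (fun f : Module.End ℂ V => f x) (Tcomm i g)
      simp only [Module.End.mul_apply] at this
      rw [← this, hx, map_smul]
    rcases hirr _ hWinv with hbot | htop
    · exact absurd hbot hμ
    · -- T i = μ • 1 and μ = lam i
      have hTeq : T i = μ • (1 : Module.End ℂ V) := by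
        apply LinearMap.ext
        intro x
        have hx : x ∈ Module.End.eigenspace (T i) μ := htop ▸ Submodule.mem_top
        rw [Module.End.mem_eigenspace_iff] at hx
        simpa using hx
      have htr : LinearMap.trace ℂ V (T i) = ((cls i).card : ℂ) * χ (c₀ i) := by
        rw [hT]
        simp only
        rw [map_sum]
        have : ∀ a ∈ cls i,
            LinearMap.trace ℂ V (((B (c₀ i) a : ℂ))⁻¹ • (π a : Module.End ℂ V))
            = χ (c₀ i) := by
          intro a ha
          rw [map_smul, smul_eq_mul, ← hχ, hχcls i a ha, ← mul_assoc,
            inv_mul_cancel₀ (Units.ne_zero (B (c₀ i) a)), one_mul]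
        rw [Finset.sum_congr rfl this, Finset.sum_const, nsmul_eq_mul]
      have htr2 : LinearMap.trace ℂ V (T i) = μ * (d : ℂ) := by
        rw [hTeq, map_smul, smul_eq_mul, LinearMap.trace_one, hd]
      have hμval : μ = lam i := by
        rw [hlam]
        simp only
        rw [← htr, htr2]
        field_simp
      rw [hTeq, hμval]
  -- pointwise expansion of χ over the regular classes
  have PW : ∀ g : G, χ g
      = ∑ C : ι, (if g ∈ cls C then (B (c₀ C) g : ℂ) * χ (c₀ C) else 0) := by
    intro g
    by_cases hreg : reg g
    · obtain ⟨C₀, hC₀⟩ := hc₀surj g hreg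
      rw [Finset.sum_eq_single C₀]
      · rw [if_pos ((hclsmem C₀ g).mpr hC₀)]
        exact hχcls C₀ g ((hclsmem C₀ g).mpr hC₀)
      · intro C _ hne
        rw [if_neg]
        intro hmem
        exact hne (hc₀inj C C₀ (((hclsmem C g).mp hmem).trans hC₀.symm))
      · intro hC₀mem
        exact absurd (Finset.mem_univ C₀) hC₀mem
    · rw [hχvan g hreg]
      symm
      apply Finset.sum_eq_zero
      intro C _
      rw [if_neg]
      intro hmem
      exact hreg (regcls C g hmem)
  -- the trace of T A * T Bc, expanded
  have MI : ∀ A Bc : ι,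
      ∑ a ∈ cls A, ∑ b ∈ cls Bc,
        ((B (c₀ A) a : ℂ))⁻¹ * ((B (c₀ Bc) b : ℂ))⁻¹ * (α a b : ℂ) * χ (a * b)
      = lam A * lam Bc * (d : ℂ) := by
    intro A Bc
    have hTT : T A * T Bc = ∑ a ∈ cls A, ∑ b ∈ cls Bc,
        (((B (c₀ A) a : ℂ))⁻¹ * ((B (c₀ Bc) b : ℂ))⁻¹ * (α a b : ℂ))
          • (π (a * b) : Module.End ℂ V) := by
      rw [hT]
      simp only
      rw [Finset.sum_mul_sum]
      refine Finset.sum_congr rfl fun a ha => Finset.sum_congr rfl fun b hb => ?_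
      rw [smul_mul_assoc, mul_smul_comm, hπ a b, smul_smul, smul_smul]
    have t1 : LinearMap.trace ℂ V (T A * T Bc) = lam A * lam Bc * (d : ℂ) := by
      rw [Tsc A, Tsc Bc, smul_mul_assoc, one_mul, smul_smul, map_smul, smul_eq_mul,
        LinearMap.trace_one, hd, mul_assoc]
    have t2 : LinearMap.trace ℂ V (T A * T Bc)
        = ∑ a ∈ cls A, ∑ b ∈ cls Bc,
          ((B (c₀ A) a : ℂ))⁻¹ * ((B (c₀ Bc) b : ℂ))⁻¹ * (α a b : ℂ) * χ (a * b) := by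
      rw [hTT, map_sum]
      refine Finset.sum_congr rfl fun a ha => ?_
      rw [map_sum]
      refine Finset.sum_congr rfl fun b hb => ?_
      rw [map_smul, smul_eq_mul, ← hχ]
    rw [← t2]
    exact t1
  -- regrouping of the double sum over target classes
  have SC : ∀ A Bc : ι,
      ∑ C : ι, (∑ a ∈ cls A, ∑ b ∈ cls Bc,
        if a * b ∈ cls C then
          ((B (c₀ C) (a * b) : ℂ) / ((B (c₀ A) a : ℂ) * (B (c₀ Bc) b : ℂ)))
            * (α a b : ℂ)
        else 0) * χ (c₀ C)
      = lam A * lam Bc * (d : ℂ) := by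
    intro A Bc
    rw [← MI A Bc]
    have step1 : ∀ C : ι, (∑ a ∈ cls A, ∑ b ∈ cls Bc,
        if a * b ∈ cls C then
          ((B (c₀ C) (a * b) : ℂ) / ((B (c₀ A) a : ℂ) * (B (c₀ Bc) b : ℂ)))
            * (α a b : ℂ)
        else 0) * χ (c₀ C)
        = ∑ a ∈ cls A, ∑ b ∈ cls Bc,
          (if a * b ∈ cls C then
            ((B (c₀ C) (a * b) : ℂ) / ((B (c₀ A) a : ℂ) * (B (c₀ Bc) b : ℂ)))
              * (α a b : ℂ) * χ (c₀ C)
          else 0) := by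
      intro C
      rw [Finset.sum_mul]
      refine Finset.sum_congr rfl fun a ha => ?_
      rw [Finset.sum_mul]
      refine Finset.sum_congr rfl fun b hb => ?_
      simp only [ite_mul, zero_mul]
    rw [Finset.sum_congr rfl fun C _ => step1 C]
    rw [Finset.sum_comm]
    refine Finset.sum_congr rfl fun a ha => ?_
    rw [Finset.sum_comm]
    refine Finset.sum_congr rfl fun b hb => ?_
    rw [PW (a * b), Finset.mul_sum]
    refine Finset.sum_congr rfl fun C _ => ?_
    split_ifs with hmem
    · rw [div_eq_mul_inv, mul_inv]
      ring
    · rw [mul_zero]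
  -- final assembly
  intro A
  funext Bc
  have clspos : ∀ i : ι, (0:ℝ) < ((cls i).card : ℝ) := by
    intro i
    have hmem : c₀ i ∈ cls i := (hclsmem i _).mpr (IsConj.refl _)
    exact_mod_cast Finset.card_pos.mpr ⟨_, hmem⟩
  have hGpos : (0:ℝ) < (Fintype.card G : ℝ) := by exact_mod_cast Fintype.card_pos
  have hsse : ∀ i : ι, ((Real.sqrt ((cls i).card : ℝ) : ℝ) : ℂ) ≠ 0 := fun i =>
    Complex.ofReal_ne_zero.mpr (Real.sqrt_pos.mpr (clspos i)).ne'
  have hsGne : ((Real.sqrt ((Fintype.card G : ℝ)) : ℝ) : ℂ) ≠ 0 :=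
    Complex.ofReal_ne_zero.mpr (Real.sqrt_pos.mpr hGpos).ne'
  have hsBne := hsse Bc
  have hterm : ∀ C : ι, M A Bc C * v C
      = (((Real.sqrt ((cls Bc).card : ℝ) : ℝ) : ℂ)
            * ((Real.sqrt ((Fintype.card G : ℝ)) : ℝ) : ℂ))⁻¹
        * ((∑ a ∈ cls A, ∑ b ∈ cls Bc,
            if a * b ∈ cls C then
              ((B (c₀ C) (a * b) : ℂ) / ((B (c₀ A) a : ℂ) * (B (c₀ Bc) b : ℂ)))
                * (α a b : ℂ)
            else 0) * χ (c₀ C)) := by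
    intro C
    have hsCne := hsse C
    rw [hM A Bc C, hv C, Real.sqrt_mul (clspos Bc).le, Real.sqrt_div (clspos C).le]
    set S : ℂ := ∑ a ∈ cls A, ∑ b ∈ cls Bc,
      if a * b ∈ cls C then
        ((B (c₀ C) (a * b) : ℂ) / ((B (c₀ A) a : ℂ) * (B (c₀ Bc) b : ℂ)))
          * (α a b : ℂ)
      else 0 with hS
    push_cast
    field_simp
  have hL : (M A).mulVec v Bc
      = (((Real.sqrt ((cls Bc).card : ℝ) : ℝ) : ℂ)
            * ((Real.sqrt ((Fintype.card G : ℝ)) : ℝ) : ℂ))⁻¹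
        * (lam A * lam Bc * (d : ℂ)) := by
    show ∑ C : ι, M A Bc C * v C = _
    rw [Finset.sum_congr rfl fun C _ => hterm C, ← Finset.mul_sum, SC A Bc]
  rw [hL, Pi.smul_apply, smul_eq_mul, hv Bc, Real.sqrt_div (clspos Bc).le]
  have hcard2 : ((cls Bc).card : ℂ)
      = ((Real.sqrt ((cls Bc).card : ℝ) : ℝ) : ℂ)^2 := by
    have h2 := Real.sq_sqrt (clspos Bc).le
    exact_mod_cast h2.symm
  simp only [hlam]
  push_cast
  rw [hcard2]
  field_simp
end

section
/- Let α be a unitary multiplier on the finite group G, let C⁽¹⁾,…,C⁽ᵐ⁾ be the α-regular conjugacy classes of G with chosen representatives c₀⁽ⁱ⁾ ∈ C⁽ⁱ⁾. For each α-regular class A with representative a₀ define the m×m complex matrix M'_A by (M'_A)_{BC} = Σ_{a∈A, a·b₀∈C} [β(c₀, a·b₀) / β(a₀, a)] · α(a, b₀), where b₀, c₀ are the chosen representatives of B, C. Then for every irreducible projective representation of G with multiplier α, with character χ and degree d, the vector v ∈ ℂᵐ with components v_i = χ(c₀⁽ⁱ⁾) satisfies M'_A · v = (|A|·χ(a₀)/d)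 · v for every α-regular class A. -/
open scoped Classical

/-- Modified Burnside matrices `M'_A`: the vector `v_i = χ(c₀⁽ⁱ⁾)`
is an eigenvector of each `M'_A` with eigenvalue `|A|·χ(a₀)/d`. -/
theorem stmt_8 {G : Type*} [Group G] [Fintype G]
    {V : Type*} [AddCommGroup V] [Module ℂ V] [FiniteDimensional ℂ V]
    (α : G → G → ℂˣ)
    (hα : ∀ x y z : G, α x y * α (x * y) z = α x (y * z) * α y z)
    (hα1 : ∀ x : G, α x 1 = 1 ∧ α 1 x = 1)
    (N : ℕ) (hN : 0 < N) (hunit : ∀ x y : G, (α x y) ^ N = 1)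
    (β : G → G → ℂˣ)
    (hβ : ∀ h g : G, β h g = α h h⁻¹ / (α h (g * h⁻¹) * α g h⁻¹))
    (reg : G → Prop)
    (hregdef : ∀ g : G, reg g ↔ ∀ h : G, g * h = h * g → β h g = 1)
    {ι : Type*} [Fintype ι] (c₀ : ι → G)
    (hc₀reg : ∀ i : ι, reg (c₀ i))
    (hc₀inj : ∀ i j : ι, IsConj (c₀ i) (c₀ j) → i = j)
    (hc₀surj : ∀ g : G, reg g → ∃ i : ι, IsConj (c₀ i) g)
    (cls : ι → Finset G)
    (hcls : ∀ i : ι, cls i = Finset.univ.filter (fun g => IsConj (c₀ i) g))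
    (B : G → G → ℂˣ)
    (hB : ∀ g h : G, reg g → B g (h * g * h⁻¹) = β h g)
    -- the matrices M'_A
    (M' : ι → Matrix ι ι ℂ)
    (hM' : ∀ A Bc C : ι, M' A Bc C =
      ∑ a ∈ cls A,
        if a * c₀ Bc ∈ cls C then
          ((B (c₀ C) (a * c₀ Bc) : ℂ) / (B (c₀ A) a : ℂ)) * (α a (c₀ Bc) : ℂ)
        else 0)
    (π : G → (Module.End ℂ V)ˣ)
    (hπ1 : π 1 = 1)
    (hπ : ∀ x y : G, (π x : Module.End ℂ V) * (π y : Module.End ℂ V)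
        = (α x y : ℂ) • (π (x * y) : Module.End ℂ V))
    (hirr : ∀ W : Submodule ℂ V,
        (∀ g : G, ∀ v ∈ W, (π g : Module.End ℂ V) v ∈ W) → W = ⊥ ∨ W = ⊤)
    (χ : G → ℂ) (hχ : ∀ g : G, χ g = LinearMap.trace ℂ V (π g : Module.End ℂ V))
    (d : ℕ) (hd : d = Module.finrank ℂ V)
    (v : ι → ℂ) (hv : ∀ i : ι, v i = χ (c₀ i)) :
    ∀ A : ι, (M' A).mulVec v = (((cls A).card : ℂ) * χ (c₀ A) / (d : ℂ)) • v := by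
  have hα1a : ∀ x : G, α x 1 = 1 := fun x => (hα1 x).1
  have hα1b : ∀ x : G, α 1 x = 1 := fun x => (hα1 x).2
  have hαinv : ∀ h : G, α h h⁻¹ = α h⁻¹ h := by
    intro h
    have c := hα h h⁻¹ h
    simpa [hα1a, hα1b] using c
  -- β h g * (α h (g*h⁻¹) * α g h⁻¹) = α h h⁻¹
  have hb' : ∀ h g : G, β h g * (α h (g * h⁻¹) * α g h⁻¹) = α h h⁻¹ := by
    intro h g
    rw [hβ, div_eq_mul_inv, inv_mul_cancel_right]
  have key1 : ∀ h g : G, α (h * g * h⁻¹) h = β h g * α h g := by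
    intro h g
    have c1 := hα h g h⁻¹
    have c2 := hα (h * g * h⁻¹) h h⁻¹
    have e1 : h * g * h⁻¹ * h = h * g := by group
    have e2 : (h : G) * h⁻¹ = 1 := mul_inv_cancel h
    rw [e1, e2, hα1a] at c2
    apply mul_right_cancel (b := α (h * g) h⁻¹)
    rw [c2, one_mul, mul_assoc, c1, ← hb' h g]
  have R : ∀ h g : G, (β h g : ℂ) • ((π h : Module.End ℂ V) * π g)
      = (π (h * g * h⁻¹) : Module.End ℂ V) * π h := by
    intro h g
    have e1 : h * g * h⁻¹ * h = h * g := by group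
    rw [hπ (h * g * h⁻¹) h, e1, key1 h g, hπ h g, smul_smul, Units.val_mul]
  have hχconj : ∀ h g : G, χ (h * g * h⁻¹) = (β h g : ℂ) * χ g := by
    intro h g
    have t1 : LinearMap.trace ℂ V (((π h : Module.End ℂ V) * π g) * (π h⁻¹ : Module.End ℂ V))
        = (α h⁻¹ h : ℂ) * χ g := by
      rw [LinearMap.trace_mul_comm, ← mul_assoc, hπ h⁻¹ h, inv_mul_cancel, hπ1]
      simp [hχ, smul_mul_assoc]
    have t2 : LinearMap.trace ℂ V (((π h : Module.End ℂ V) * π g) * (π h⁻¹ : Module.End ℂ V))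
        = (α h g : ℂ) * ((α (h * g) h⁻¹ : ℂ) * χ (h * g * h⁻¹)) := by
      rw [hπ h g, smul_mul_assoc, hπ (h * g) h⁻¹]
      simp [hχ, smul_smul, mul_assoc]
    have keyU : α h⁻¹ h = β h g * (α h g * α (h * g) h⁻¹) := by
      rw [← hαinv h, ← hb' h g, ← hα h g h⁻¹]
    have keyc : (α h⁻¹ h : ℂ) = (β h g : ℂ) * ((α h g : ℂ) * (α (h * g) h⁻¹ : ℂ)) := by
      exact_mod_cast congrArg Units.val keyU
    have e := t1.symm.trans t2
    rw [keyc] at e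
    have hb0 : (α h g : ℂ) ≠ 0 := Units.ne_zero _
    have hc0 : (α (h * g) h⁻¹ : ℂ) ≠ 0 := Units.ne_zero _
    apply mul_left_cancel₀ (mul_ne_zero hb0 hc0)
    linear_combination -e
  have hχ0 : ∀ g : G, ¬ reg g → χ g = 0 := by
    intro g hg
    rw [hregdef] at hg
    push_neg at hg
    obtain ⟨h, hcomm, hne⟩ := hg
    have e : h * g * h⁻¹ = g := by rw [← hcomm, mul_inv_cancel_right]
    have hcj := hχconj h g
    rw [e] at hcj
    have hne' : (β h g : ℂ) ≠ 1 := fun hc => hne (Units.ext hc)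
    have h2 : ((β h g : ℂ) - 1) * χ g = 0 := by linear_combination -hcj
    rcases mul_eq_zero.mp h2 with h1 | h1
    · exact absurd (sub_eq_zero.mp h1) hne'
    · exact h1
  have hmem : ∀ (i : ι) (a : G), a ∈ cls i ↔ IsConj (c₀ i) a := by
    intro i a; rw [hcls i]; simp
  have hχcls : ∀ (i : ι) (a : G), a ∈ cls i → χ a = (B (c₀ i) a : ℂ) * χ (c₀ i) := by
    intro i a ha
    rw [hmem] at ha
    obtain ⟨k, hk⟩ := isConj_iff.mp ha
    rw [← hk, hB _ _ (hc₀reg i), hχconj]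
  intro A
  rcases subsingleton_or_nontrivial V with hV | hV
  · have hχz : ∀ g : G, χ g = 0 := by
      intro g; rw [hχ]
      have h0 : (π g : Module.End ℂ V) = 0 := LinearMap.ext fun x => Subsingleton.elim _ _
      rw [h0, map_zero]
    have hvz : v = 0 := funext fun i => by rw [hv, hχz]; rfl
    rw [hvz]
    simp
  -- Nontrivial case
  haveI : Nontrivial (Module.End ℂ V) := by
    obtain ⟨x, hx⟩ := exists_ne (0 : V)
    exact ⟨1, 0, fun hc => hx (by simpa using LinearMap.congr_fun hc x)⟩
  have hπne : ∀ g : G, (π g : Module.End ℂ V) ≠ 0 := by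
    intro g h0
    have h1 : ((π g : (Module.End ℂ V)ˣ) : Module.End ℂ V) * ((π g)⁻¹ : (Module.End ℂ V)ˣ) = 1 :=
      (π g).mul_inv
    rw [h0, zero_mul] at h1
    exact zero_ne_one h1
  have hcancel : ∀ (c c' : ℂ) (x : Module.End ℂ V), x ≠ 0 → c • x = c' • x → c = c' := by
    intro c c' x hx h
    by_contra hne
    have h0 : (c - c') • x = 0 := by rw [sub_smul, h, sub_self]
    rcases smul_eq_zero.mp h0 with h1 | h1
    · exact hne (sub_eq_zero.mp h1)
    · exact hx h1
  have βmult : ∀ h k g : G, (β (h * k) g : ℂ) = (β k g : ℂ) * (β h (k * g * k⁻¹) : ℂ) := by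
    intro h k g
    have r1 := R k g
    have r2 := R h (k * g * k⁻¹)
    have r3 := R (h * k) g
    have egr : h * (k * g * k⁻¹) * h⁻¹ = h * k * g * (h * k)⁻¹ := by group
    rw [egr] at r2
    have xne : (π (h * k) : Module.End ℂ V) * π g ≠ 0 := by
      rw [hπ]; exact smul_ne_zero (Units.ne_zero _) (hπne _)
    have eA : (π (h * k * g * (h * k)⁻¹) : Module.End ℂ V) * π h * π k
        = ((β h (k * g * k⁻¹) : ℂ) * (β k g : ℂ) * (α h k : ℂ)) •
          ((π (h * k) : Module.End ℂ V) * π g) := by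
      rw [← r2, smul_mul_assoc, mul_assoc ((π h : Module.End ℂ V)), ← r1, mul_smul_comm,
        smul_smul, ← mul_assoc ((π h : Module.End ℂ V)), hπ h k, smul_mul_assoc, smul_smul,
        mul_assoc]
    have eB : (π (h * k * g * (h * k)⁻¹) : Module.End ℂ V) * π h * π k
        = ((α h k : ℂ) * (β (h * k) g : ℂ)) • ((π (h * k) : Module.End ℂ V) * π g) := by
      rw [mul_assoc, hπ h k, mul_smul_comm, ← r3, smul_smul]
    have hs := hcancel _ _ _ xne (eA.symm.trans eB)
    have hαne : (α h k : ℂ) ≠ 0 := Units.ne_zero _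
    apply mul_left_cancel₀ hαne
    linear_combination -hs
  have hregconj : ∀ g h : G, reg g → reg (h * g * h⁻¹) := by
    intro g h hg
    rw [hregdef]
    intro k hk
    have hk' : g * (h⁻¹ * k * h) = (h⁻¹ * k * h) * g := by
      have e := congrArg (fun x => h⁻¹ * x * h) hk
      simpa [mul_assoc] using e
    have hβk' : β (h⁻¹ * k * h) g = 1 := (hregdef g).mp hg _ hk'
    have ekg : (h⁻¹ * k * h) * g * (h⁻¹ * k * h)⁻¹ = g := by
      rw [← hk', mul_inv_cancel_right]
    have m1 := βmult k h g
    have m2 := βmult h (h⁻¹ * k * h) g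
    rw [ekg, hβk'] at m2
    have ehk : h * (h⁻¹ * k * h) = k * h := by group
    rw [ehk] at m2
    have hβne : (β h g : ℂ) ≠ 0 := Units.ne_zero _
    have hval : (β k (h * g * h⁻¹) : ℂ) = 1 := by
      have e := m1.symm.trans m2
      rw [Units.val_one, one_mul] at e
      exact mul_left_cancel₀ hβne (by linear_combination e)
    exact Units.ext (by simpa using hval)
  have hBconj : ∀ a h : G, a ∈ cls A →
      (B (c₀ A) (h * a * h⁻¹) : ℂ) = (B (c₀ A) a : ℂ) * (β h a : ℂ) := by
    intro a h ha
    rw [hmem] at ha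
    obtain ⟨k, hk⟩ := isConj_iff.mp ha
    have e1 : B (c₀ A) a = β k (c₀ A) := by rw [← hk]; exact hB _ _ (hc₀reg A)
    have e2 : h * a * h⁻¹ = (h * k) * c₀ A * (h * k)⁻¹ := by rw [← hk]; group
    have e3 : B (c₀ A) (h * a * h⁻¹) = β (h * k) (c₀ A) := by
      rw [e2]; exact hB _ _ (hc₀reg A)
    rw [e1, e3, βmult h k (c₀ A), hk]
  set T : Module.End ℂ V :=
    ∑ a ∈ cls A, ((B (c₀ A) a : ℂ))⁻¹ • (π a : Module.End ℂ V) with hTdef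
  have hTcomm : ∀ h : G, (π h : Module.End ℂ V) * T = T * (π h : Module.End ℂ V) := by
    intro h
    rw [hTdef, Finset.mul_sum, Finset.sum_mul]
    refine Finset.sum_nbij' (fun a => h * a * h⁻¹) (fun a => h⁻¹ * a * h) ?_ ?_ ?_ ?_ ?_
    · intro a ha
      rw [hmem] at ha ⊢
      exact ha.trans (isConj_iff.mpr ⟨h, rfl⟩)
    · intro a ha
      rw [hmem] at ha ⊢
      refine ha.trans (isConj_iff.mpr ⟨h⁻¹, by group⟩)
    · intro a _; group
    · intro a _; group
    · intro a ha
      rw [mul_smul_comm, smul_mul_assoc, hBconj a h ha, ← R h a, smul_smul, mul_inv, inv_mul_cancel_right₀ (Units.ne_zero (β h a))]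
  obtain ⟨μ, hμ⟩ := Module.End.exists_eigenvalue T
  have hT : T = μ • 1 := by
    have hinv : ∀ g : G, ∀ x ∈ Module.End.eigenspace T μ,
        (π g : Module.End ℂ V) x ∈ Module.End.eigenspace T μ := by
      intro g x hx
      rw [Module.End.mem_eigenspace_iff] at hx ⊢
      have hc := LinearMap.congr_fun (hTcomm g) x
      simp only [Module.End.mul_apply] at hc
      rw [← hc, hx, map_smul]
    rcases hirr (Module.End.eigenspace T μ) hinv with hbot | htop
    · exact absurd hbot hμ
    · ext x
      have hx : x ∈ Module.End.eigenspace T μ := htop ▸ Submodule.mem_top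
      rw [Module.End.mem_eigenspace_iff] at hx
      simpa using hx
  have htr1 : LinearMap.trace ℂ V T = ((cls A).card : ℂ) * χ (c₀ A) := by
    rw [hTdef, map_sum]
    rw [Finset.sum_congr rfl (fun a ha => ?_), Finset.sum_const, nsmul_eq_mul]
    rw [LinearMap.map_smul, ← hχ, hχcls A a ha, smul_eq_mul,
      inv_mul_cancel_left₀ (Units.ne_zero _)]
  have hdne : (d : ℂ) ≠ 0 := by
    rw [hd]
    exact_mod_cast (Module.finrank_pos (R := ℂ) (M := V)).ne'
  have htr2 : LinearMap.trace ℂ V T = μ * d := by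
    rw [hT, LinearMap.map_smul, LinearMap.trace_one, ← hd, smul_eq_mul]
  have hμval : μ = ((cls A).card : ℂ) * χ (c₀ A) / (d : ℂ) := by
    field_simp
    linear_combination htr2.symm.trans htr1
  funext Bc
  have inner : ∀ a ∈ cls A,
      (∑ C : ι, (if a * c₀ Bc ∈ cls C then
          ((B (c₀ C) (a * c₀ Bc) : ℂ) / (B (c₀ A) a : ℂ)) * (α a (c₀ Bc) : ℂ) else 0)
        * χ (c₀ C))
      = (B (c₀ A) a : ℂ)⁻¹ * ((α a (c₀ Bc) : ℂ) * χ (a * c₀ Bc)) := by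
    intro a ha
    by_cases hreg : reg (a * c₀ Bc)
    · obtain ⟨i0, hi0⟩ := hc₀surj _ hreg
      have hmem0 : a * c₀ Bc ∈ cls i0 := (hmem i0 _).mpr hi0
      rw [Finset.sum_eq_single i0]
      · rw [if_pos hmem0, hχcls i0 _ hmem0]
        have hBA : (B (c₀ A) a : ℂ) ≠ 0 := Units.ne_zero _
        field_simp
      · intro C _ hC
        rw [if_neg, zero_mul]
        intro hmemC
        exact hC (hc₀inj C i0 (((hmem C _).mp hmemC).trans hi0.symm))
      · intro h; exact absurd (Finset.mem_univ i0) h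
    · rw [hχ0 _ hreg, mul_zero, mul_zero]
      refine Finset.sum_eq_zero fun C _ => ?_
      rw [if_neg, zero_mul]
      intro hmemC
      obtain ⟨k, hk⟩ := isConj_iff.mp ((hmem C _).mp hmemC)
      exact hreg (hk ▸ hregconj (c₀ C) k (hc₀reg C))
  have lhs1 : (M' A).mulVec v Bc
      = ∑ a ∈ cls A, (B (c₀ A) a : ℂ)⁻¹ * ((α a (c₀ Bc) : ℂ) * χ (a * c₀ Bc)) := by
    rw [Matrix.mulVec]
    simp only [dotProduct, hM', hv]
    rw [Finset.sum_congr rfl (fun C _ => Finset.sum_mul _ _ _), Finset.sum_comm]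
    exact Finset.sum_congr rfl inner
  have tr3 : LinearMap.trace ℂ V (T * (π (c₀ Bc) : Module.End ℂ V))
      = ∑ a ∈ cls A, (B (c₀ A) a : ℂ)⁻¹ * ((α a (c₀ Bc) : ℂ) * χ (a * c₀ Bc)) := by
    rw [hTdef, Finset.sum_mul, map_sum]
    refine Finset.sum_congr rfl fun a _ => ?_
    rw [smul_mul_assoc, LinearMap.map_smul, hπ a (c₀ Bc), LinearMap.map_smul, ← hχ,
      smul_eq_mul, smul_eq_mul]
  have tr4 : LinearMap.trace ℂ V (T * (π (c₀ Bc) : Module.End ℂ V)) = μ * χ (c₀ Bc) := by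
    rw [hT, smul_mul_assoc, one_mul, LinearMap.map_smul, ← hχ, smul_eq_mul]
  have final := tr3.symm.trans tr4
  rw [lhs1, final, Pi.smul_apply, smul_eq_mul, hv, hμval]
end

section
/- Let α be a multiplier on the finite group G and (π,V,α) a projective representation. Let {f_i}_{i=1}^{(dim V)²} be a basis of the vector space of linear maps V → V. Then π is irreducible if and only if for every i there is a scalar c_i ∈ ℂ with ⟨f_i⟩_π = c_i • 1_V. -/
/-!
Averaging `T ↦ |G|⁻¹ • ∑ g, π(g)⁻¹ T π(g)` produces operators commuting with every `π h`: the
multiplier picked up by `π g * π h` cancels against the one in `π h * π(gh)⁻¹`, and reindexing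
`g ↦ g h` does the rest. So Schur's lemma makes every average scalar when `π` is irreducible.
Conversely, the average of a projection onto an invariant subspace `W` maps `V` into `W` and is
the identity on `W`; if it is a scalar, `W` is `0` or `V`. As averaging is linear, scalar averages
on a basis give scalar averages everywhere.
-/

open Module

theorem conj_mul_eq_mul_conj_of_mul_eq_smul {R A : Type*} [CommSemiring R] [Semiring A]
    [Algebra R A] {u v w : Aˣ} {c : R} (h : (u : A) * v = c • (w : A)) (T : A) :
    ↑u⁻¹ * T * u * v = v * (↑w⁻¹ * T * w) := by
  have hv : (v : A) = c • (↑u⁻¹ * w) := by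
    rw [← mul_smul_comm, ← h, ← mul_assoc, Units.inv_mul, one_mul]
  calc ↑u⁻¹ * T * u * v = c • (↑u⁻¹ * T * w) := by
        rw [mul_assoc _ (u : A), h, mul_smul_comm]
    _ = v * (↑w⁻¹ * T * w) := by
        simp [hv, mul_assoc]

theorem Module.Basis.apply_mem_of_forall_apply_basis_mem {ι R M N : Type*} [Semiring R]
    [AddCommMonoid M] [Module R M] [AddCommMonoid N] [Module R N] (b : Basis ι R M)
    (L : M →ₗ[R] N) {S : Submodule R N} (h : ∀ i, L (b i) ∈ S) (x : M) : L x ∈ S := by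
  have hspan : Submodule.span R (Set.range b) ≤ S.comap L :=
    Submodule.span_le.2 (Set.range_subset_iff.2 h)
  rw [b.span_eq] at hspan
  exact hspan Submodule.mem_top

section ConjAvg

variable {G : Type*} [Fintype G]

noncomputable def conjAvg (k : Type*) {A : Type*} [Field k] [Ring A] [Algebra k A]
    (ρ : G → Aˣ) : A →ₗ[k] A :=
  (Fintype.card G : k)⁻¹ •
    ∑ g, LinearMap.mulLeft k (↑(ρ g)⁻¹ : A) ∘ₗ LinearMap.mulRight k (ρ g : A)

variable {k : Type*} [Field k]

theorem conjAvg_apply {A : Type*} [Ring A] [Algebra k A] (ρ : G → Aˣ) (T : A) :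
    conjAvg k ρ T = (Fintype.card G : k)⁻¹ • ∑ g, ↑(ρ g)⁻¹ * T * (ρ g : A) := by
  simp [conjAvg, mul_assoc]

theorem conjAvg_commute [Group G] {A : Type*} [Ring A] [Algebra k A] {ρ : G → Aˣ}
    {c : G → G → k} (hρ : ∀ x y, (ρ x : A) * ρ y = c x y • (ρ (x * y) : A)) (T : A) (h : G) :
    Commute (conjAvg k ρ T) (ρ h : A) := by
  rw [Commute, SemiconjBy, conjAvg_apply, smul_mul_assoc, mul_smul_comm, Finset.sum_mul,
    Finset.mul_sum]
  congr 1
  simp_rw [conj_mul_eq_mul_conj_of_mul_eq_smul (hρ _ h)]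
  exact Fintype.sum_equiv (Equiv.mulRight h) _ _ fun _ => rfl

variable {V : Type*} [AddCommGroup V] [Module k V]

theorem Submodule.units_inv_apply_mem [FiniteDimensional k V] {W : Submodule k V}
    {u : (End k V)ˣ} (hu : ∀ v ∈ W, (u : End k V) v ∈ W) {v : V} (hv : v ∈ W) :
    (↑u⁻¹ : End k V) v ∈ W := by
  have hmap : W.map (u : End k V) = W :=
    Submodule.eq_of_le_of_finrank_eq (Submodule.map_le_iff_le_comap.2 hu)
      ((LinearMap.GeneralLinearGroup.generalLinearEquiv k V u).finrank_map_eq W)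
  obtain ⟨w, hw, rfl⟩ := hmap.symm ▸ hv
  rwa [← Module.End.mul_apply, Units.inv_mul, Module.End.one_apply]

theorem conjAvg_apply_mem [FiniteDimensional k V] {ρ : G → (End k V)ˣ} {W : Submodule k V}
    (hW : ∀ g, ∀ v ∈ W, (ρ g : End k V) v ∈ W) {T : End k V} (hT : ∀ v, T v ∈ W) (v : V) :
    conjAvg k ρ T v ∈ W := by
  rw [conjAvg_apply, LinearMap.smul_apply, LinearMap.sum_apply]
  exact W.smul_mem _ (W.sum_mem fun g _ => W.units_inv_apply_mem (hW g) (hT _))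

theorem conjAvg_apply_of_mem (hG : (Fintype.card G : k) ≠ 0) {ρ : G → (End k V)ˣ}
    {W : Submodule k V} (hW : ∀ g, ∀ v ∈ W, (ρ g : End k V) v ∈ W) {T : End k V}
    (hT : ∀ v ∈ W, T v = v) {v : V} (hv : v ∈ W) : conjAvg k ρ T v = v := by
  have hg : ∀ g, (↑(ρ g)⁻¹ * T * (ρ g : End k V)) v = v := fun g => by
    rw [Module.End.mul_apply, Module.End.mul_apply, hT _ (hW g v hv), ← Module.End.mul_apply,
      Units.inv_mul, Module.End.one_apply]
  simp [conjAvg_apply, hg, ← Nat.cast_smul_eq_nsmul k, smul_smul, inv_mul_cancel₀ hG]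

theorem eq_bot_or_eq_top_of_forall_conjAvg_eq_smul_one [FiniteDimensional k V]
    (hG : (Fintype.card G : k) ≠ 0) {ρ : G → (End k V)ˣ}
    (hρ : ∀ T, ∃ c : k, conjAvg k ρ T = c • 1) (W : Submodule k V)
    (hW : ∀ g, ∀ v ∈ W, (ρ g : End k V) v ∈ W) : W = ⊥ ∨ W = ⊤ := by
  obtain ⟨q, hq⟩ := W.exists_isCompl
  obtain ⟨c, hc⟩ := hρ (W.projection q hq)
  have hfix : ∀ v ∈ W, c • v = v := fun v hv => by
    simpa [hc] using
      conjAvg_apply_of_mem hG hW (fun w hw => W.projection_apply_of_mem_left hq hw) hv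
  have hmem : ∀ v, c • v ∈ W := fun v => by
    simpa [hc] using conjAvg_apply_mem hW (W.projection_apply_mem hq) v
  by_cases hc0 : c = 0
  · refine Or.inl (eq_bot_iff.2 fun v hv => ?_)
    simpa [hc0, eq_comm] using hfix v hv
  · refine Or.inr (eq_top_iff.2 fun v _ => ?_)
    simpa [smul_smul, hc0] using W.smul_mem c⁻¹ (hmem v)

end ConjAvg

theorem exists_eq_smul_one_of_forall_commute {ι k V : Type*} [Field k] [IsAlgClosed k]
    [AddCommGroup V] [Module k V] [FiniteDimensional k V] {ρ : ι → End k V}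
    (hirr : ∀ W : Submodule k V, (∀ i, ∀ v ∈ W, ρ i v ∈ W) → W = ⊥ ∨ W = ⊤) {S : End k V}
    (hS : ∀ i, Commute S (ρ i)) : ∃ c : k, S = c • 1 := by
  cases subsingleton_or_nontrivial V with
  | inl _ => exact ⟨0, Subsingleton.elim _ _⟩
  | inr _ =>
    obtain ⟨c, hc⟩ := S.exists_eigenvalue
    refine ⟨c, ?_⟩
    rcases hirr (S.eigenspace c) fun i => S.mapsTo_genEigenspace_of_comm (hS i) c 1 with h | h
    · exact absurd h hc
    · ext v
      simpa using Module.End.mem_eigenspace_iff.1 (h ▸ Submodule.mem_top : v ∈ S.eigenspace c)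

theorem stmt_16_general {G : Type*} [Group G] [Fintype G]
    {V : Type*} [AddCommGroup V] [Module ℂ V] [FiniteDimensional ℂ V]
    (α : G → G → ℂˣ)
    (π : G → (Module.End ℂ V)ˣ)
    (hπ : ∀ x y : G, (π x : Module.End ℂ V) * (π y : Module.End ℂ V)
        = (α x y : ℂ) • (π (x * y) : Module.End ℂ V))
    (f : Fin ((Module.finrank ℂ V) ^ 2) → Module.End ℂ V)
    (hf : ∃ b : Module.Basis (Fin ((Module.finrank ℂ V) ^ 2)) ℂ (Module.End ℂ V), ⇑b = f)
    (avg : Module.End ℂ V → Module.End ℂ V)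
    (havg : ∀ T : Module.End ℂ V, avg T = (Fintype.card G : ℂ)⁻¹ •
        ∑ g : G, (((π g)⁻¹ : (Module.End ℂ V)ˣ) : Module.End ℂ V) * T *
          (π g : Module.End ℂ V)) :
    (∀ W : Submodule ℂ V,
        (∀ g : G, ∀ v ∈ W, (π g : Module.End ℂ V) v ∈ W) → W = ⊥ ∨ W = ⊤)
      ↔ (∀ i : Fin ((Module.finrank ℂ V) ^ 2),
          ∃ c : ℂ, avg (f i) = c • (1 : Module.End ℂ V)) := by
  obtain ⟨b, rfl⟩ := hf
  obtain rfl : avg = conjAvg ℂ π := funext fun T => (havg T).trans (conjAvg_apply π T).symm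
  constructor
  · intro hirr i
    exact exists_eq_smul_one_of_forall_commute hirr (conjAvg_commute hπ (b i))
  · intro hscalar
    refine eq_bot_or_eq_top_of_forall_conjAvg_eq_smul_one (Nat.cast_ne_zero.2 Fintype.card_ne_zero)
      fun T => ?_
    have hT : conjAvg ℂ π T ∈ ℂ ∙ (1 : End ℂ V) :=
      b.apply_mem_of_forall_apply_basis_mem _
        (fun i => Submodule.mem_span_singleton.2 ((hscalar i).imp fun _ => Eq.symm)) T
    exact (Submodule.mem_span_singleton.1 hT).imp fun _ => Eq.symm

/-- Given a basis `{f_i}` of `End(V)`, `π` is irreducible iff each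
`⟨f_i⟩_π` is a scalar multiple of the identity. -/
theorem stmt_16 {G : Type*} [Group G] [Fintype G]
    {V : Type*} [AddCommGroup V] [Module ℂ V] [FiniteDimensional ℂ V]
    (α : G → G → ℂˣ)
    (hα : ∀ x y z : G, α x y * α (x * y) z = α x (y * z) * α y z)
    (hα1 : ∀ x : G, α x 1 = 1 ∧ α 1 x = 1)
    (π : G → (Module.End ℂ V)ˣ)
    (hπ1 : π 1 = 1)
    (hπ : ∀ x y : G, (π x : Module.End ℂ V) * (π y : Module.End ℂ V)
        = (α x y : ℂ) • (π (x * y) : Module.End ℂ V))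
    (f : Fin ((Module.finrank ℂ V) ^ 2) → Module.End ℂ V)
    (hf : ∃ b : Module.Basis (Fin ((Module.finrank ℂ V) ^ 2)) ℂ (Module.End ℂ V), ⇑b = f)
    (avg : Module.End ℂ V → Module.End ℂ V)
    (havg : ∀ T : Module.End ℂ V, avg T = (Fintype.card G : ℂ)⁻¹ •
        ∑ g : G, (((π g)⁻¹ : (Module.End ℂ V)ˣ) : Module.End ℂ V) * T *
          (π g : Module.End ℂ V)) :
    (∀ W : Submodule ℂ V,
        (∀ g : G, ∀ v ∈ W, (π g : Module.End ℂ V) v ∈ W) → W = ⊥ ∨ W = ⊤)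
      ↔ (∀ i : Fin ((Module.finrank ℂ V) ^ 2),
          ∃ c : ℂ, avg (f i) = c • (1 : Module.End ℂ V)) :=
  stmt_16_general α π hπ f hf avg havg
end

section
/- Let α be a multiplier on the finite group G and (π,V,α) a projective representation. Define the dual map π* : G → GL(V*) on the dual space V* by π*(g) = α(g,g⁻¹)⁻¹ • (π(g⁻¹))ᵀ, where (·)ᵀ is the transpose (dual) map. Then the tensor product map (π⊗π*)(g) := π(g) ⊗ π*(g) on V ⊗ V* satisfies (π⊗π*)(x) ∘ (π⊗π*)(y) = (π⊗π*)(xy) for all x,y ∈ G, i.e. π⊗π* is a linear representation of G; moreover, if π(g) is not a scalar multiple of 1_V for any g ≠ 1, then π⊗π* is faithful, i.e. (π⊗π*)(g) = 1 implies g = 1. -/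
private lemma dualMap_smul' {V : Type*} [AddCommGroup V] [Module ℂ V]
    (c : ℂ) (f : Module.End ℂ V) :
    LinearMap.dualMap (c • f) = c • LinearMap.dualMap f := by
  ext φ v
  simp [LinearMap.dualMap_apply]

/-- `π ⊗ π*` is a linear representation of `G`, and it is faithful
provided `π(g)` is not scalar for any `g ≠ 1`. -/
theorem stmt_18 {G : Type*} [Group G] [Fintype G]
    {V : Type*} [AddCommGroup V] [Module ℂ V] [FiniteDimensional ℂ V]
    (α : G → G → ℂˣ)
    (hα : ∀ x y z : G, α x y * α (x * y) z = α x (y * z) * α y z)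
    (hα1 : ∀ x : G, α x 1 = 1 ∧ α 1 x = 1)
    (π : G → (Module.End ℂ V)ˣ)
    (hπ1 : π 1 = 1)
    (hπ : ∀ x y : G, (π x : Module.End ℂ V) * (π y : Module.End ℂ V)
        = (α x y : ℂ) • (π (x * y) : Module.End ℂ V))
    -- the dual projective representation π*
    (πstar : G → Module.End ℂ (Module.Dual ℂ V))
    (hπstar : ∀ g : G, πstar g =
        ((α g g⁻¹ : ℂ))⁻¹ • LinearMap.dualMap (π g⁻¹ : Module.End ℂ V))
    -- the tensor product π ⊗ π* acting on V ⊗ V*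
    (ρ : G → Module.End ℂ (TensorProduct ℂ V (Module.Dual ℂ V)))
    (hρ : ∀ g : G, ρ g = TensorProduct.map (π g : Module.End ℂ V) (πstar g)) :
    (∀ x y : G, ρ x * ρ y = ρ (x * y))
    ∧ ρ 1 = 1
    ∧ ((∀ g : G, g ≠ 1 → ∀ c : ℂ, (π g : Module.End ℂ V) ≠ c • (1 : Module.End ℂ V)) →
        ∀ g : G, ρ g = 1 → g = 1) := by
  -- cocycle identity on ℂ
  have hαC : ∀ x y z : G, (α x y : ℂ) * (α (x * y) z : ℂ)
      = (α x (y * z) : ℂ) * (α y z : ℂ) := by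
    intro x y z
    have := congrArg (Units.val) (hα x y z)
    simpa using this
  have hα1C : ∀ x : G, (α x 1 : ℂ) = 1 ∧ (α 1 x : ℂ) = 1 := by
    intro x
    constructor
    · rw [(hα1 x).1]; simp
    · rw [(hα1 x).2]; simp
  -- the key scalar identity
  have key : ∀ x y : G, (α x y : ℂ) * (α y⁻¹ x⁻¹ : ℂ) * (α (x * y) (y⁻¹ * x⁻¹) : ℂ)
      = (α x x⁻¹ : ℂ) * (α y y⁻¹ : ℂ) := by
    intro x y
    have h1 := hαC x y (y⁻¹ * x⁻¹)
    have h2 := hαC y y⁻¹ x⁻¹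
    rw [mul_inv_cancel_left] at h1
    rw [mul_inv_cancel, (hα1C x⁻¹).2, mul_one] at h2
    linear_combination (α y⁻¹ x⁻¹ : ℂ) * h1 - (α x x⁻¹ : ℂ) * h2
  -- multiplicativity
  have hmul : ∀ x y : G, ρ x * ρ y = ρ (x * y) := by
    intro x y
    rw [hρ, hρ, hρ, hπstar, hπstar, hπstar]
    have hcomp :
        TensorProduct.map (π x : Module.End ℂ V) (((α x x⁻¹ : ℂ))⁻¹ • LinearMap.dualMap (π x⁻¹ : Module.End ℂ V)) *
        TensorProduct.map (π y : Module.End ℂ V) (((α y y⁻¹ : ℂ))⁻¹ • LinearMap.dualMap (π y⁻¹ : Module.End ℂ V))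
        = TensorProduct.map ((π x : Module.End ℂ V) * (π y : Module.End ℂ V))
            ((((α x x⁻¹ : ℂ))⁻¹ • LinearMap.dualMap (π x⁻¹ : Module.End ℂ V)) ∘ₗ
             (((α y y⁻¹ : ℂ))⁻¹ • LinearMap.dualMap (π y⁻¹ : Module.End ℂ V))) := by
      exact (TensorProduct.map_comp _ _ _ _).symm
    rw [hcomp]
    have hd : (LinearMap.dualMap (π x⁻¹ : Module.End ℂ V)) ∘ₗ
        (LinearMap.dualMap (π y⁻¹ : Module.End ℂ V))
        = (α y⁻¹ x⁻¹ : ℂ) • LinearMap.dualMap (π (y⁻¹ * x⁻¹) : Module.End ℂ V) := by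
      rw [LinearMap.dualMap_comp_dualMap, ← Module.End.mul_eq_comp, hπ, dualMap_smul']
    rw [LinearMap.comp_smul, LinearMap.smul_comp, hd, hπ, mul_inv_rev]
    simp only [TensorProduct.map_smul_left, TensorProduct.map_smul_right, smul_smul]
    congr 1
    have hxy : (α (x * y) (y⁻¹ * x⁻¹) : ℂ) ≠ 0 := Units.ne_zero _
    have hx : (α x x⁻¹ : ℂ) ≠ 0 := Units.ne_zero _
    have hy : (α y y⁻¹ : ℂ) ≠ 0 := Units.ne_zero _
    have k := key x y
    set A := (α x y : ℂ) with hA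
    set Bc := (α y⁻¹ x⁻¹ : ℂ) with hBc
    set C := (α (x * y) (y⁻¹ * x⁻¹) : ℂ) with hC
    set D := (α x x⁻¹ : ℂ) with hD
    set E := (α y y⁻¹ : ℂ) with hE
    field_simp
    linear_combination k
  refine ⟨hmul, ?_, ?_⟩
  · have h11 : ((α 1 (1 : G) : ℂ))⁻¹ = 1 := by rw [(hα1C 1).1]; simp
    have hdm1 : LinearMap.dualMap (1 : Module.End ℂ V)
        = (1 : Module.End ℂ (Module.Dual ℂ V)) := by ext φ v; rfl
    rw [hρ, hπstar]
    simp only [inv_one, hπ1, Units.val_one, h11, one_smul, hdm1]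
    exact TensorProduct.map_one
  · intro hns g hρg
    by_contra hg
    -- π g is nonzero
    have hπg0 : (π g : Module.End ℂ V) ≠ 0 := by
      have := hns g hg 0
      simpa using this
    obtain ⟨v, hv⟩ : ∃ v, (π g : Module.End ℂ V) v ≠ 0 := by
      by_contra h
      push_neg at h
      exact hπg0 (by ext u; simpa using h u)
    set B := πstar g with hB
    -- the pairing functionals
    let P : Module.Dual ℂ V → V → (TensorProduct ℂ V (Module.Dual ℂ V) →ₗ[ℂ] ℂ) :=
      fun f' w => TensorProduct.lift
        (LinearMap.mk₂ ℂ (fun u h => f' u * h w)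
          (fun u₁ u₂ h => by simp [add_mul])
          (fun c u h => by simp [mul_assoc])
          (fun u h₁ h₂ => by simp [mul_add])
          (fun c u h => by simp; ring))
    have hP : ∀ (f' : Module.Dual ℂ V) (w u : V) (f : Module.Dual ℂ V),
        P f' w (u ⊗ₜ[ℂ] f) = f' u * f w := by
      intro f' w u f
      simp [P]
    -- from ρ g = 1 : for all u, f, π g u ⊗ B f = u ⊗ f
    have htens : ∀ (u : V) (f : Module.Dual ℂ V),
        ((π g : Module.End ℂ V) u) ⊗ₜ[ℂ] (B f) = u ⊗ₜ[ℂ] f := by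
      intro u f
      have := congrArg (fun T : Module.End ℂ (TensorProduct ℂ V (Module.Dual ℂ V)) =>
        T (u ⊗ₜ[ℂ] f)) hρg
      simpa [hρ g, TensorProduct.map_tmul] using this
    have pair : ∀ (f' : Module.Dual ℂ V) (w u : V) (f : Module.Dual ℂ V),
        f' ((π g : Module.End ℂ V) u) * (B f) w = f' u * f w := by
      intro f' w u f
      have := congrArg (P f' w) (htens u f)
      simpa [hP] using this
    -- find a nonzero functional value on π g v
    obtain ⟨φ, hφ⟩ : ∃ φ : Module.Dual ℂ V, φ ((π g : Module.End ℂ V) v) ≠ 0 := by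
      by_contra h
      push_neg at h
      exact hv ((Module.forall_dual_apply_eq_zero_iff ℂ _).mp h)
    -- find f, w with (B f) w ≠ 0
    have hBfw : ∃ (f : Module.Dual ℂ V) (w : V), (B f) w ≠ 0 := by
      by_contra h
      push_neg at h
      have hv' : v ≠ 0 := by
        intro hv0
        apply hv
        rw [hv0, map_zero]
      obtain ⟨ψ, hψ⟩ : ∃ ψ : Module.Dual ℂ V, ψ v ≠ 0 := by
        by_contra h'
        push_neg at h'
        exact hv' ((Module.forall_dual_apply_eq_zero_iff ℂ _).mp h')
      have h0 : v ⊗ₜ[ℂ] φ = (0 : TensorProduct ℂ V (Module.Dual ℂ V)) := by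
        have hB0 : B φ = 0 := by ext w; exact h φ w
        have := htens v φ
        rw [hB0, TensorProduct.tmul_zero] at this
        exact this.symm
      have := congrArg (P ψ ((π g : Module.End ℂ V) v)) h0
      rw [hP, map_zero] at this
      rcases mul_eq_zero.mp this with h1 | h1
      · exact hψ h1
      · exact hφ h1
    obtain ⟨f, w, hfw⟩ := hBfw
    set c : ℂ := f w / (B f) w with hc
    have hscal : (π g : Module.End ℂ V) = c • (1 : Module.End ℂ V) := by
      ext u
      have hdu : ∀ f' : Module.Dual ℂ V, f' ((π g : Module.End ℂ V) u - c • u) = 0 := by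
        intro f'
        have hp := pair f' w u f
        have heq : f' ((π g : Module.End ℂ V) u) = c * f' u := by
          rw [hc, div_mul_eq_mul_div, eq_div_iff hfw]
          linear_combination hp
        rw [map_sub, heq, map_smul, smul_eq_mul, sub_self]
      have := sub_eq_zero.mp ((Module.forall_dual_apply_eq_zero_iff ℂ _).mp hdu)
      simpa using this
    exact hns g hg c hscal
end
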